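/- Let A and B be C*-algebras (or Banach algebras) and let M₁, ..., Mₙ be closed ideals of A and N₁, ..., Nₙ be closed ideals of B, each with bounded approximate identities. For any cross norm ⊗̂ such that the tensor product of closed ideals K ⊗̂ L is a closed ideal of A ⊗̂ B, one has A ⊗̂ (Σᵢ Nᵢ) = Σᵢ (A ⊗̂ Nᵢ) and (Σᵢ Mᵢ) ⊗̂ B = Σᵢ (Mᵢ ⊗̂ B). -/

import Mathlib

open Pointwise Filter

/-- A model of the operator space projective tensor product `A ⊗̂ B` of two C*-algebras:
a Banach *-algebra `T` together with a bilinear, multiplicative, star-preserving map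
`incl : A × B → T` which is a cross norm on elementary tensors and has dense span. -/
structure OSProjTensor (A B T : Type*) [NonUnitalCStarAlgebra A] [NonUnitalCStarAlgebra B]
    [NonUnitalNormedRing T] [StarRing T] [NormedSpace ℂ T] [CompleteSpace T]
    [IsScalarTower ℂ T T] [SMulCommClass ℂ T T] where
  incl : A →ₗ[ℂ] B →ₗ[ℂ] T
  mul_incl : ∀ (a a' : A) (b b' : B), incl a b * incl a' b' = incl (a * a') (b * b')
  star_incl : ∀ (a : A) (b : B), star (incl a b) = incl (star a) (star b)
  norm_incl : ∀ (a : A) (b : B), ‖incl a b‖ = ‖a‖ * ‖b‖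
  dense_span : Dense (Submodule.span ℂ {x : T | ∃ a b, x = incl a b} : Set T)

variable {A B T : Type*} [NonUnitalCStarAlgebra A] [NonUnitalCStarAlgebra B]
  [NonUnitalNormedRing T] [StarRing T] [NormedSpace ℂ T] [CompleteSpace T]
  [IsScalarTower ℂ T T] [SMulCommClass ℂ T T]

/-- The product ideal `K ⊗̂ L`: the closure in `A ⊗̂ B` of the span of the elementary
tensors with entries from `K` and `L`. -/
def OSProjTensor.prodIdeal (p : OSProjTensor A B T) (K : Set A) (L : Set B) : Set T :=
  closure (Submodule.span ℂ {x : T | ∃ a ∈ K, ∃ b ∈ L, x = p.incl a b} : Set T)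

/-- A bounded approximate identity for a subset `I` of a normed ring. -/
def BoundedApproxIdentity {R : Type*} [NonUnitalNormedRing R] (I : Set R) : Prop :=
  ∃ (ι : Type) (l : Filter ι) (e : ι → R), l.NeBot ∧ (∀ i, e i ∈ I) ∧
    (∃ C : ℝ, ∀ i, ‖e i‖ ≤ C) ∧
    ∀ x ∈ I, Filter.Tendsto (fun i => e i * x) l (nhds x) ∧
      Filter.Tendsto (fun i => x * e i) l (nhds x)

/-!
Write `Jᵢ = A ⊗̂ Nᵢ`. Each `Jᵢ` is a closed two-sided ideal of `A ⊗̂ B` with bounded right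
approximate units `u ⊗ v`, where `u` runs through the approximate unit of the C⋆-algebra `A` and `v`
through the one of `Nᵢ`. If `I` is a closed right ideal of a Banach algebra and `J` a closed left
ideal with bounded right approximate units, then `v = i + j ∈ I + J` can be rewritten as
`(i - i e) + (v e + (j - j e))` with both summands of norm `O(‖v‖)`; summing a fast series in the
closure of `I + J` then shows that `I + J` is closed. Hence `Σᵢ Jᵢ` is closed, and as it lies in
`A ⊗̂ Σᵢ Nᵢ` and contains every `a ⊗ b` with `b ∈ Σᵢ Nᵢ`, it is `A ⊗̂ Σᵢ Nᵢ`. The second identity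
is the first one for the flipped tensor product.
-/

open Topology

theorem AddSubgroup.isClosed_sup_of_exists_norm_le {E : Type*} [NormedAddCommGroup E]
    [CompleteSpace E] {I J : AddSubgroup E} (hI : IsClosed (I : Set E))
    (hJ : IsClosed (J : Set E)) {C : ℝ}
    (hC : ∀ v ∈ I ⊔ J, ∃ i ∈ I, ∃ j ∈ J, i + j = v ∧ ‖i‖ ≤ C * ‖v‖ ∧ ‖j‖ ≤ C * ‖v‖) :
    IsClosed ((I ⊔ J : AddSubgroup E) : Set E) := by
  have := hI.completeSpace_coe
  have := hJ.completeSpace_coe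
  let f : NormedAddGroupHom (I × J) E :=
    (I.subtype.coprod J.subtype).mkNormedAddGroupHom 2 fun x => by
      simp only [AddMonoidHom.coprod_apply, AddSubgroup.coe_subtype]
      calc ‖(x.1 : E) + x.2‖ ≤ ‖x.1‖ + ‖x.2‖ := norm_add_le _ _
        _ ≤ 2 * ‖x‖ := by linarith [norm_fst_le x, norm_snd_le x]
  have hf : f.SurjectiveOnWith (I ⊔ J) (max C 1) := by
    intro v hv
    obtain ⟨i, hi, j, hj, rfl, hiv, hjv⟩ := hC v hv
    refine ⟨(⟨i, hi⟩, ⟨j, hj⟩), rfl, norm_prod_le_iff.mpr ⟨?_, ?_⟩⟩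
    · exact hiv.trans (by gcongr; exact le_max_left _ _)
    · exact hjv.trans (by gcongr; exact le_max_left _ _)
  refine isClosed_of_closure_subset fun z hz => ?_
  obtain ⟨g, rfl, -⟩ := controlled_closure_of_complete (by positivity) one_pos hf z
    (by rwa [← AddSubgroup.topologicalClosure_coe] at hz)
  exact add_mem (AddSubgroup.mem_sup_left g.1.2) (AddSubgroup.mem_sup_right g.2.2)

def HasBoundedRightApproxUnits {R : Type*} [NonUnitalNormedRing R] (J : Set R) (C : ℝ) : Prop :=
  ∀ j ∈ J, ∀ δ > 0, ∃ e ∈ J, ‖e‖ ≤ C ∧ ‖j - j * e‖ < δ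

section BanachAlgebra

variable {R : Type*} [NonUnitalNormedRing R]

theorem AddSubgroup.exists_add_eq_norm_le_of_mem_sup {I J : AddSubgroup R}
    (hI : ∀ x ∈ I, ∀ t, x * t ∈ I) (hJ : ∀ x ∈ J, ∀ t, t * x ∈ J) {C : ℝ}
    (hJe : HasBoundedRightApproxUnits (J : Set R) C) {v : R} (hv : v ∈ I ⊔ J) :
    ∃ i ∈ I, ∃ j ∈ J, i + j = v ∧ ‖i‖ ≤ (2 + C) * ‖v‖ ∧ ‖j‖ ≤ (2 + C) * ‖v‖ := by
  rcases eq_or_ne v 0 with rfl | hv0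
  · exact ⟨0, I.zero_mem, 0, J.zero_mem, add_zero 0, by simp, by simp⟩
  obtain ⟨i, hi, j, hj, rfl⟩ := AddSubgroup.mem_sup.mp hv
  obtain ⟨e, he, heC, hje⟩ := hJe j hj ‖i + j‖ (norm_pos_iff.mpr hv0)
  have hj' : ‖(i + j) * e + (j - j * e)‖ ≤ (1 + C) * ‖i + j‖ := by
    calc ‖(i + j) * e + (j - j * e)‖ ≤ ‖i + j‖ * ‖e‖ + ‖j - j * e‖ :=
          (norm_add_le _ _).trans (by gcongr; exact norm_mul_le _ _)
      _ ≤ ‖i + j‖ * C + ‖i + j‖ := by gcongr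
      _ = (1 + C) * ‖i + j‖ := by ring
  have hsum : (i - i * e) + ((i + j) * e + (j - j * e)) = i + j := by noncomm_ring
  refine ⟨i - i * e, sub_mem hi (hI i hi e), _, add_mem (hJ e he _) (sub_mem hj (hJ e he j)),
    hsum, ?_, hj'.trans (by gcongr; linarith)⟩
  calc ‖i - i * e‖ = ‖(i + j) - ((i + j) * e + (j - j * e))‖ := by
        rw [eq_sub_of_add_eq hsum]
    _ ≤ ‖i + j‖ + (1 + C) * ‖i + j‖ := (norm_sub_le _ _).trans (by gcongr)
    _ = (2 + C) * ‖i + j‖ := by ring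

theorem AddSubgroup.isClosed_sup_of_hasBoundedRightApproxUnits [CompleteSpace R]
    {I J : AddSubgroup R} (hIc : IsClosed (I : Set R)) (hJc : IsClosed (J : Set R))
    (hI : ∀ x ∈ I, ∀ t, x * t ∈ I) (hJ : ∀ x ∈ J, ∀ t, t * x ∈ J) {C : ℝ}
    (hJe : HasBoundedRightApproxUnits (J : Set R) C) :
    IsClosed ((I ⊔ J : AddSubgroup R) : Set R) :=
  isClosed_sup_of_exists_norm_le hIc hJc fun _ hv =>
    exists_add_eq_norm_le_of_mem_sup hI hJ hJe hv

variable {𝕜 : Type*} [Ring 𝕜] [Module 𝕜 R]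

theorem Submodule.mul_mem_iSup {ι : Sort*} {J : ι → Submodule 𝕜 R}
    (hJ : ∀ i, ∀ x ∈ J i, ∀ t, x * t ∈ J i) : ∀ x ∈ ⨆ i, J i, ∀ t, x * t ∈ ⨆ i, J i :=
  fun _ hx t => Submodule.iSup_induction J (motive := fun x => x * t ∈ ⨆ i, J i) hx
    (fun i y hy => Submodule.mem_iSup_of_mem i (hJ i y hy t)) (by simp)
    fun y z hy hz => by rw [add_mul]; exact add_mem hy hz

theorem Submodule.isClosed_biSup_of_hasBoundedRightApproxUnits [CompleteSpace R] {ι : Type*}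
    (J : ι → Submodule 𝕜 R) (hc : ∀ i, IsClosed (J i : Set R))
    (hl : ∀ i, ∀ x ∈ J i, ∀ t, t * x ∈ J i) (hr : ∀ i, ∀ x ∈ J i, ∀ t, x * t ∈ J i)
    (he : ∀ i, ∃ C, HasBoundedRightApproxUnits (J i : Set R) C) (s : Finset ι) :
    IsClosed ((⨆ i ∈ s, J i : Submodule 𝕜 R) : Set R) := by
  classical
  induction s using Finset.induction_on with
  | empty => simp
  | insert a s _ ih =>
    obtain ⟨C, hC⟩ := he a
    rw [Finset.iSup_insert, sup_comm, ← Submodule.coe_toAddSubgroup, Submodule.sup_toAddSubgroup]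
    exact AddSubgroup.isClosed_sup_of_hasBoundedRightApproxUnits ih (hc a)
      (Submodule.mul_mem_iSup fun i => Submodule.mul_mem_iSup fun _ => hr i) (hl a) hC

theorem hasBoundedRightApproxUnits_of_tendsto [IsScalarTower 𝕜 R R] [ContinuousConstSMul 𝕜 R]
    {S J : Set R} (hJ : J ⊆ closure (Submodule.span 𝕜 S)) {F : Filter R} [F.NeBot] {C : ℝ}
    (hF : ∀ᶠ e in F, e ∈ J ∧ ‖e‖ ≤ C) (hS : ∀ s ∈ S, Tendsto (s * ·) F (𝓝 s)) :
    HasBoundedRightApproxUnits J C := by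
  intro j hj δ hδ
  have hC : 0 ≤ C := by
    obtain ⟨e, -, he⟩ := hF.exists
    exact (norm_nonneg e).trans he
  have hspan : ∀ x ∈ Submodule.span 𝕜 S, Tendsto (x * ·) F (𝓝 x) := by
    intro x hx
    induction hx using Submodule.span_induction with
    | mem s hs => exact hS s hs
    | zero => simp
    | add x y _ _ hx hy => simpa only [add_mul] using hx.add hy
    | smul c x _ hx => simpa only [smul_mul_assoc] using hx.const_smul c
  obtain ⟨x, hx, hjx⟩ := Metric.mem_closure_iff.mp (hJ hj) (δ / (2 * (1 + C))) (by positivity)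
  obtain ⟨e, ⟨heJ, heC⟩, hxe⟩ := (hF.and
    ((hspan x hx).eventually (Metric.ball_mem_nhds x (half_pos hδ)))).exists
  refine ⟨e, heJ, heC, ?_⟩
  rw [dist_eq_norm'] at hxe
  rw [dist_eq_norm] at hjx
  calc ‖j - j * e‖ = ‖(j - x) - (j - x) * e + (x - x * e)‖ := by noncomm_ring
    _ ≤ ‖j - x‖ + ‖j - x‖ * ‖e‖ + ‖x - x * e‖ := by
        refine (norm_add_le _ _).trans (add_le_add_left ((norm_sub_le _ _).trans ?_) _)
        gcongr; exact norm_mul_le _ _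
    _ ≤ (1 + C) * ‖j - x‖ + ‖x - x * e‖ := by nlinarith [norm_nonneg (j - x)]
    _ < (1 + C) * (δ / (2 * (1 + C))) + δ / 2 := by gcongr
    _ = δ := by field_simp; ring

end BanachAlgebra

theorem mul_mem_of_mem_closure_span {𝕜 R : Type*} [CommSemiring 𝕜] [NonUnitalNonAssocSemiring R]
    [TopologicalSpace R] [IsTopologicalSemiring R] [Module 𝕜 R] [IsScalarTower 𝕜 R R]
    [SMulCommClass 𝕜 R R] {S S' : Set R} {U : Submodule 𝕜 R} (hU : IsClosed (U : Set R))
    (h : ∀ s ∈ S, ∀ s' ∈ S', s * s' ∈ U) {x y : R} (hx : x ∈ closure (Submodule.span 𝕜 S))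
    (hy : y ∈ closure (Submodule.span 𝕜 S')) : x * y ∈ U := by
  have hspan : ∀ a ∈ Submodule.span 𝕜 S, ∀ b ∈ Submodule.span 𝕜 S', LinearMap.mul 𝕜 R a b ∈ U :=
    Submodule.map₂_le.mp <| by
      rw [Submodule.map₂_span_span, Submodule.span_le]
      rintro _ ⟨s, hs, s', hs', rfl⟩
      exact h s hs s' hs'
  exact hU.closure_subset (map_mem_closure₂ continuous_mul hx hy hspan)

theorem TwoSidedIdeal.exists_sum_eq_of_mem_iSup {R ι : Type*} [NonUnitalNonAssocRing R]
    [Fintype ι] (N : ι → TwoSidedIdeal R) {x : R} (hx : x ∈ ⨆ i, N i) :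
    ∃ f : ι → R, (∀ i, f i ∈ N i) ∧ x = ∑ i, f i := by
  classical
  let D : TwoSidedIdeal R := .mk' {x | ∃ f : ι → R, (∀ i, f i ∈ N i) ∧ x = ∑ i, f i}
    ⟨0, fun i => (N i).zero_mem, by simp⟩
    (fun ⟨f, hf, hx⟩ ⟨g, hg, hy⟩ =>
      ⟨f + g, fun i => (N i).add_mem (hf i) (hg i), by simp [hx, hy, Finset.sum_add_distrib]⟩)
    (fun ⟨f, hf, hx⟩ => ⟨-f, fun i => (N i).neg_mem (hf i), by simp [hx]⟩)
    (fun {r} _ ⟨f, hf, hy⟩ =>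
      ⟨(r * ·) ∘ f, fun i => (N i).mul_mem_left _ _ (hf i), by simp [hy, Finset.mul_sum]⟩)
    (fun {_ r} ⟨f, hf, hx⟩ =>
      ⟨(· * r) ∘ f, fun i => (N i).mul_mem_right _ _ (hf i), by simp [hx, Finset.sum_mul]⟩)
  have hND : ⨆ i, N i ≤ D := iSup_le fun i y hy => (TwoSidedIdeal.mem_mk' ..).mpr
    ⟨Pi.single i y, fun j => by
      rcases eq_or_ne j i with rfl | hji
      · simpa using hy
      · simp [Pi.single_eq_of_ne hji, (N j).zero_mem], by simp⟩
  simpa [D] using hND hx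

theorem Submodule.mem_iSup_iff_exists_sum {R M ι : Type*} [Semiring R] [AddCommMonoid M]
    [Module R M] [Fintype ι] (p : ι → Submodule R M) {x : M} :
    x ∈ ⨆ i, p i ↔ ∃ f : ι → M, (∀ i, f i ∈ p i) ∧ x = ∑ i, f i := by
  refine ⟨fun hx => ?_, fun ⟨f, hf, hx⟩ => hx ▸ sum_mem fun i _ => mem_iSup_of_mem i (hf i)⟩
  obtain ⟨μ, hμ⟩ := (mem_iSup_finset_iff_exists_sum (s := Finset.univ) p x).mp (by simpa using hx)
  exact ⟨fun i => μ i, fun i => (μ i).2, hμ.symm⟩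

namespace OSProjTensor

variable (p : OSProjTensor A B T)

def prodSubmodule (K : Set A) (L : Set B) : Submodule ℂ T :=
  (Submodule.span ℂ {x : T | ∃ a ∈ K, ∃ b ∈ L, x = p.incl a b}).topologicalClosure

theorem coe_prodSubmodule (K : Set A) (L : Set B) :
    (p.prodSubmodule K L : Set T) = p.prodIdeal K L :=
  Submodule.topologicalClosure_coe _

theorem isClosed_prodSubmodule (K : Set A) (L : Set B) :
    IsClosed (p.prodSubmodule K L : Set T) :=
  Submodule.isClosed_topologicalClosure _

theorem incl_mem_prodSubmodule {K : Set A} {L : Set B} {a : A} {b : B} (ha : a ∈ K) (hb : b ∈ L) :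
    p.incl a b ∈ p.prodSubmodule K L :=
  Submodule.le_topologicalClosure _ (Submodule.subset_span ⟨a, ha, b, hb, rfl⟩)

theorem prodSubmodule_mono {K K' : Set A} {L L' : Set B} (hK : K ⊆ K') (hL : L ⊆ L') :
    p.prodSubmodule K L ≤ p.prodSubmodule K' L' :=
  Submodule.topologicalClosure_mono <| Submodule.span_le.mpr <| by
    rintro _ ⟨a, ha, b, hb, rfl⟩
    exact Submodule.subset_span ⟨a, hK ha, b, hL hb, rfl⟩

theorem continuous_incl : Continuous fun q : A × B => p.incl q.1 q.2 :=
  (p.incl.mkContinuous₂ 1 fun a b => by rw [p.norm_incl, one_mul]).continuous₂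

theorem mem_closure_span_incl (t : T) :
    t ∈ closure (Submodule.span ℂ {x : T | ∃ a b, x = p.incl a b} : Set T) := by
  rw [p.dense_span.closure_eq]; trivial

theorem mul_mem_prodSubmodule_univ_left (N : TwoSidedIdeal B) :
    ∀ x ∈ p.prodSubmodule Set.univ (N : Set B), ∀ t, t * x ∈ p.prodSubmodule Set.univ N := by
  intro x hx t
  refine mul_mem_of_mem_closure_span (p.isClosed_prodSubmodule _ _) ?_
    (p.mem_closure_span_incl t) hx
  rintro _ ⟨a', b', rfl⟩ _ ⟨a, -, b, hb, rfl⟩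
  rw [p.mul_incl]
  exact p.incl_mem_prodSubmodule trivial (N.mul_mem_left _ _ hb)

theorem mul_mem_prodSubmodule_univ_right (N : TwoSidedIdeal B) :
    ∀ x ∈ p.prodSubmodule Set.univ (N : Set B), ∀ t, x * t ∈ p.prodSubmodule Set.univ N := by
  intro x hx t
  refine mul_mem_of_mem_closure_span (p.isClosed_prodSubmodule _ _) ?_ hx
    (p.mem_closure_span_incl t)
  rintro _ ⟨a, -, b, hb, rfl⟩ _ ⟨a', b', rfl⟩
  rw [p.mul_incl]
  exact p.incl_mem_prodSubmodule trivial (N.mul_mem_right _ _ hb)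

theorem hasBoundedRightApproxUnits_prodSubmodule_univ {L : Set B}
    (hL : BoundedApproxIdentity L) :
    ∃ C, HasBoundedRightApproxUnits (p.prodSubmodule Set.univ L : Set T) C := by
  obtain ⟨ι, l, e, hl, heL, ⟨C, hC⟩, he⟩ := hL
  let _ := CStarAlgebra.spectralOrder A
  have _ := CStarAlgebra.spectralOrderedRing A
  have hA := CStarAlgebra.increasingApproximateUnit A
  let F : Filter T := map (fun w : A × B => p.incl w.1 w.2)
    (CStarAlgebra.approximateUnit A ×ˢ map e l)
  have : F.NeBot := by simp only [F]; infer_instance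
  refine ⟨C, hasBoundedRightApproxUnits_of_tendsto (𝕜 := ℂ) (F := F)
    (p.coe_prodSubmodule _ _).subset ?_ ?_⟩
  · have hv : ∀ᶠ v in map e l, v ∈ L ∧ ‖v‖ ≤ C :=
      eventually_map.mpr (.of_forall fun i => ⟨heL i, hC i⟩)
    refine eventually_map.mpr ((hA.eventually_norm.prod_mk hv).mono ?_)
    rintro ⟨u, v⟩ ⟨hu, hvL, hvC⟩
    refine ⟨p.incl_mem_prodSubmodule trivial hvL, ?_⟩
    rw [p.norm_incl]
    exact (mul_le_of_le_one_left (norm_nonneg v) hu).trans hvC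
  · rintro _ ⟨a, -, b, hb, rfl⟩
    refine tendsto_map'_iff.mpr ?_
    simp only [Function.comp_def, p.mul_incl]
    exact (p.continuous_incl.tendsto (a, b)).comp
      (((hA.tendsto_mul_left a).comp tendsto_fst).prodMk_nhds
        ((tendsto_map'_iff.mpr (he b hb).2).comp tendsto_snd))

theorem prodIdeal_univ_iSup {ι : Type*} [Fintype ι] (N : ι → TwoSidedIdeal B)
    (hN : ∀ i, BoundedApproxIdentity (N i : Set B)) :
    p.prodIdeal Set.univ ((⨆ i, N i : TwoSidedIdeal B) : Set B) =
      {x : T | ∃ f : ι → T, (∀ i, f i ∈ p.prodIdeal Set.univ (N i : Set B)) ∧ x = ∑ i, f i} := by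
  set J : ι → Submodule ℂ T := fun i => p.prodSubmodule Set.univ (N i : Set B)
  have hJ : IsClosed ((⨆ i, J i : Submodule ℂ T) : Set T) := by
    simpa using Submodule.isClosed_biSup_of_hasBoundedRightApproxUnits J
      (fun _ => p.isClosed_prodSubmodule _ _) (fun i => p.mul_mem_prodSubmodule_univ_left (N i))
      (fun i => p.mul_mem_prodSubmodule_univ_right (N i))
      (fun i => p.hasBoundedRightApproxUnits_prodSubmodule_univ (hN i)) Finset.univ
  have hsup : p.prodSubmodule Set.univ ((⨆ i, N i : TwoSidedIdeal B) : Set B) = ⨆ i, J i := by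
    refine le_antisymm (Submodule.topologicalClosure_minimal _ ?_ hJ)
      (iSup_le fun i => p.prodSubmodule_mono subset_rfl (le_iSup N i))
    rw [Submodule.span_le]
    rintro _ ⟨a, -, b, hb, rfl⟩
    obtain ⟨g, hg, rfl⟩ := TwoSidedIdeal.exists_sum_eq_of_mem_iSup N hb
    rw [map_sum]
    exact sum_mem fun i _ => Submodule.mem_iSup_of_mem i (p.incl_mem_prodSubmodule trivial (hg i))
  ext x
  rw [← coe_prodSubmodule, hsup, SetLike.mem_coe, Submodule.mem_iSup_iff_exists_sum]
  simp only [J, ← p.coe_prodSubmodule, SetLike.mem_coe]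
  rfl

def flip : OSProjTensor B A T where
  incl := p.incl.flip
  mul_incl b b' a a' := p.mul_incl a a' b b'
  star_incl b a := p.star_incl a b
  norm_incl b a := (p.norm_incl a b).trans (mul_comm _ _)
  dense_span := by
    convert p.dense_span using 5
    exact exists_comm

theorem prodIdeal_flip (K : Set A) (L : Set B) : p.flip.prodIdeal L K = p.prodIdeal K L := by
  unfold prodIdeal
  congr! 4
  ext
  exact ⟨fun ⟨b, hb, a, ha, h⟩ => ⟨a, ha, b, hb, h⟩, fun ⟨a, ha, b, hb, h⟩ => ⟨b, hb, a, ha, h⟩⟩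

end OSProjTensor

theorem prodIdeal_distrib_sum_general (p : OSProjTensor A B T) {n : ℕ}
    (M : Fin n → TwoSidedIdeal A) (N : Fin n → TwoSidedIdeal B)
    (hMbai : ∀ i, BoundedApproxIdentity ((M i : Set A)))
    (hNbai : ∀ i, BoundedApproxIdentity ((N i : Set B))) :
    (p.prodIdeal Set.univ ((⨆ i, N i : TwoSidedIdeal B) : Set B) =
      {x : T | ∃ f : Fin n → T, (∀ i, f i ∈ p.prodIdeal Set.univ ((N i : Set B))) ∧
        x = ∑ i, f i}) ∧
    (p.prodIdeal ((⨆ i, M i : TwoSidedIdeal A) : Set A) Set.univ =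
      {x : T | ∃ f : Fin n → T, (∀ i, f i ∈ p.prodIdeal ((M i : Set A)) Set.univ) ∧
        x = ∑ i, f i}) := by
  refine ⟨p.prodIdeal_univ_iSup N hNbai, ?_⟩
  simpa only [p.prodIdeal_flip] using p.flip.prodIdeal_univ_iSup M hMbai

/-- The operator space projective tensor product distributes over finite sums of closed
ideals: `A ⊗̂ (Σᵢ Nᵢ) = Σᵢ (A ⊗̂ Nᵢ)` and `(Σᵢ Mᵢ) ⊗̂ B = Σᵢ (Mᵢ ⊗̂ B)`. -/
theorem prodIdeal_distrib_sum (p : OSProjTensor A B T) {n : ℕ}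
    (M : Fin n → TwoSidedIdeal A) (N : Fin n → TwoSidedIdeal B)
    (hM : ∀ i, IsClosed ((M i : Set A))) (hN : ∀ i, IsClosed ((N i : Set B)))
    (hMbai : ∀ i, BoundedApproxIdentity ((M i : Set A)))
    (hNbai : ∀ i, BoundedApproxIdentity ((N i : Set B))) :
    (p.prodIdeal Set.univ ((⨆ i, N i : TwoSidedIdeal B) : Set B) =
      {x : T | ∃ f : Fin n → T, (∀ i, f i ∈ p.prodIdeal Set.univ ((N i : Set B))) ∧
        x = ∑ i, f i}) ∧
    (p.prodIdeal ((⨆ i, M i : TwoSidedIdeal A) : Set A) Set.univ =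
      {x : T | ∃ f : Fin n → T, (∀ i, f i ∈ p.prodIdeal ((M i : Set A)) Set.univ) ∧
        x = ∑ i, f i}) :=
  prodIdeal_distrib_sum_general p M N hMbai hNbai
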